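/- arXiv:1901.09031 — 3 statements merged into one kernel-verified Lean document; each statement's English description precedes it below -/
import Mathlib

section
/- Let (C, D, T') be a quantum Manin pair. Then the monoid object T^R(𝟙_D) in C is commutative: writing m : T^R(𝟙_D) ⊗ T^R(𝟙_D) ⟶ T^R(𝟙_D) for its multiplication and σ for the braiding of C, one has σ_{T^R(𝟙_D), T^R(𝟙_D)} ≫ m = m. -/
/-!
Transport everything across the adjunction `T ⊣ T^R`. The multiplication of `T^R(𝟙)` is the
transpose of `T(A ⊗ A) ≅ T A ⊗ T A ⟶ 𝟙 ⊗ 𝟙 ≅ 𝟙` built from the counit `ε : T A ⟶ 𝟙`, and since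
`T` factors through the Drinfeld centre it sends the braiding `σ_{A,A}` to the half-braiding of
`T'(A)` at `T A`. By naturality that half-braiding slides through `ε ⊗ ε` to the half-braiding
at the unit object, which is forced to be the trivial one `ρ ≫ λ⁻¹`.
-/

open CategoryTheory MonoidalCategory CategoryTheory.Functor

universe v₁ v₂ u₁ u₂

namespace CategoryTheory

namespace HalfBraiding

variable {D : Type*} [Category D] [MonoidalCategory D] {X : D} (b : HalfBraiding X)

lemma β_tensorUnit_hom : (b.β (𝟙_ D)).hom = (ρ_ X).hom ≫ (λ_ X).inv := by
  -- monoidality and naturality at `ρ_ 𝟙` give `β 𝟙 = β 𝟙 ≫ φ ≫ β 𝟙` for a coherence iso `φ`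
  have h := b.naturality (ρ_ (𝟙_ D)).hom
  rw [b.monoidal] at h
  simp only [whiskerLeft_rightUnitor, Category.assoc, MonoidalCategory.whiskerRight_id,
    id_whiskerLeft, triangle_assoc_comp_right, Iso.hom_inv_id, Category.comp_id, Iso.inv_hom_id,
    Iso.cancel_iso_inv_left, Iso.cancel_iso_hom_left] at h
  have h' : (ρ_ _).inv ≫ (α_ _ _ _).hom ≫ (λ_ _).hom ≫ (b.β (𝟙_ D)).hom = 𝟙 _ :=
    (cancel_epi (b.β (𝟙_ D)).hom).1 (by simpa using h.symm)
  have hβ : (b.β (𝟙_ D)).hom = (λ_ _).inv ≫ (α_ _ _ _).inv ≫ (ρ_ _).hom := by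
    rw [Iso.eq_inv_comp, Iso.eq_inv_comp]
    simpa using (Iso.inv_comp_eq _).1 h'
  rw [hβ]
  monoidal

lemma β_hom_comp_tensorHom_comp_leftUnitor_hom (f : X ⟶ 𝟙_ D) :
    (b.β X).hom ≫ (f ⊗ₘ f) ≫ (λ_ (𝟙_ D)).hom = (f ⊗ₘ f) ≫ (λ_ (𝟙_ D)).hom := by
  rw [MonoidalCategory.tensorHom_def, Category.assoc, ← b.naturality_assoc, β_tensorUnit_hom]
  simp only [Category.assoc, leftUnitor_naturality, Iso.inv_hom_id_assoc]
  rw [← rightUnitor_naturality, ← leftUnitor_naturality, whisker_exchange_assoc, unitors_equal]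

end HalfBraiding

lemma Adjunction.homEquiv_symm_μ_comp_map {C D : Type*} [Category C] [MonoidalCategory C]
    [Category D] [MonoidalCategory D] {F : C ⥤ D} {G : D ⥤ C} [F.OplaxMonoidal]
    [G.LaxMonoidal] (adj : F ⊣ G) [adj.IsMonoidal] {X Y Z : D} (g : X ⊗ Y ⟶ Z) :
    (adj.homEquiv _ _).symm (LaxMonoidal.μ G X Y ≫ G.map g) =
      OplaxMonoidal.δ F _ _ ≫ (adj.counit.app X ⊗ₘ adj.counit.app Y) ≫ g := by
  rw [Adjunction.homEquiv_counit, map_comp, Category.assoc, adj.counit_naturality,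
    adj.map_μ_comp_counit_app_tensor_assoc]

lemma Center.comp_forget_map_braiding_comp_δ {C D : Type*} [Category C] [MonoidalCategory C]
    [BraidedCategory C] [Category D] [MonoidalCategory D] (F : C ⥤ Center D) [F.Braided]
    (X Y : C) :
    (F ⋙ Center.forget D).map (β_ X Y).hom ≫ OplaxMonoidal.δ (F ⋙ Center.forget D) Y X =
      OplaxMonoidal.δ (F ⋙ Center.forget D) X Y ≫
        (Center.forget D).map (β_ (F.obj X) (F.obj Y)).hom := by
  have h : F.map (β_ X Y).hom ≫ OplaxMonoidal.δ F Y X = OplaxMonoidal.δ F X Y ≫ (β_ _ _).hom := by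
    rw [Functor.map_braiding, Category.assoc, Category.assoc, Monoidal.μ_δ, Category.comp_id]
  rw [OplaxMonoidal.comp_δ, OplaxMonoidal.comp_δ, Center.forget_δ, Center.forget_δ]
  -- `forget.obj (A ⊗ B)` and `forget.obj A ⊗ forget.obj B` agree only after unfolding `Center`
  erw [Category.comp_id, Category.comp_id]
  have h' := congr_arg (Center.forget D).map h
  rw [Functor.map_comp, Functor.map_comp] at h'
  exact h'

end CategoryTheory

theorem stmt_0 {C : Type u₁} [Category.{v₁} C] [MonoidalCategory C] [BraidedCategory C]
    {D : Type u₂} [Category.{v₂} D] [MonoidalCategory D]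
    (T' : C ⥤ Center D) [T'.Braided]
    (TR : D ⥤ C) [TR.LaxMonoidal]
    (adj : (T' ⋙ Center.forget D) ⊣ TR) [adj.IsMonoidal] :
    (β_ (TR.obj (𝟙_ D)) (TR.obj (𝟙_ D))).hom ≫
        (LaxMonoidal.μ TR (𝟙_ D) (𝟙_ D) ≫ TR.map (λ_ (𝟙_ D)).hom) =
      LaxMonoidal.μ TR (𝟙_ D) (𝟙_ D) ≫ TR.map (λ_ (𝟙_ D)).hom := by
  apply (adj.homEquiv _ _).symm.injective
  rw [adj.homEquiv_naturality_left_symm, adj.homEquiv_symm_μ_comp_map, ← Category.assoc,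
    Center.comp_forget_map_braiding_comp_δ]
  exact (Category.assoc _ _ _).trans
    (whisker_eq _ ((T'.obj _).2.β_hom_comp_tensorHom_comp_leftUnitor_hom _))
end

section
/- Let (C, D, T') be a quantum Manin pair and let η denote the unit of the adjunction T ⊣ T^R and δ the lax monoidal structure maps of T^R. Then T^R is lax C-monoidal: for every X ∈ C and V ∈ D, the two composites X ⊗ T^R(V) ⟶ T^R(V ⊗ T(X)) agree, namely (η_X ⊗ id_{T^R(V)}) ≫ δ_{T(X), V} ≫ T^R(τ_{X,V}) equals σ_{X, T^R(V)} ≫ (id_{T^R(V)} ⊗ η_X) ≫ δ_{V, T(X)}, where σ is the braiding of C and τ_{X,V} : T(X) ⊗ V ≅ V ⊗ T(X) is the half-braiding of T'(X). -/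
/-!
Transport both composites along the adjunction `T ⊣ T^R`. For a monoidal adjunction the
transpose of `(η_X ▷ T^R W) ≫ δ_{T X, W}` is `δ^T_{X, T^R W} ≫ (T X ◁ ε_W)`, and symmetrically
on the other side, by the triangle identity. Since `T'` is braided, `T` carries `σ` to the
half-braiding of `T'(X)`, so the claim reduces to naturality of that half-braiding at `ε_V`.
-/

open CategoryTheory MonoidalCategory CategoryTheory.Functor

universe v₁ v₂ u₁ u₂

namespace CategoryTheory.Adjunction

open OplaxMonoidal LaxMonoidal

variable {C : Type*} [Category C] [MonoidalCategory C] {D : Type*} [Category D]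
  [MonoidalCategory D] {F : C ⥤ D} {G : D ⥤ C} [F.OplaxMonoidal] [G.LaxMonoidal]
  (adj : F ⊣ G) [adj.IsMonoidal]

lemma homEquiv_symm_unit_whiskerRight_comp_μ (X : C) (W : D) :
    (adj.homEquiv (X ⊗ G.obj W) (F.obj X ⊗ W)).symm
        ((adj.unit.app X ▷ G.obj W) ≫ μ G (F.obj X) W) =
      δ F X (G.obj W) ≫ (F.obj X ◁ adj.counit.app W) := by
  rw [homEquiv_counit, F.map_comp, Category.assoc, map_μ_comp_counit_app_tensor]
  dsimp only [Functor.comp_obj, Functor.id_obj]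
  rw [← δ_natural_left_assoc, MonoidalCategory.tensorHom_def, ← comp_whiskerRight_assoc,
    left_triangle_components, id_whiskerRight, Category.id_comp]

lemma homEquiv_symm_whiskerLeft_unit_comp_μ (X : C) (W : D) :
    (adj.homEquiv (G.obj W ⊗ X) (W ⊗ F.obj X)).symm
        ((G.obj W ◁ adj.unit.app X) ≫ μ G W (F.obj X)) =
      δ F (G.obj W) X ≫ (adj.counit.app W ▷ F.obj X) := by
  rw [homEquiv_counit, F.map_comp, Category.assoc, map_μ_comp_counit_app_tensor]
  dsimp only [Functor.comp_obj, Functor.id_obj]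
  rw [← δ_natural_right_assoc, tensorHom_def', ← MonoidalCategory.whiskerLeft_comp_assoc,
    left_triangle_components, MonoidalCategory.whiskerLeft_id, Category.id_comp]

end CategoryTheory.Adjunction

namespace CategoryTheory.Center

open OplaxMonoidal

lemma δ_forget_comp_whiskerLeft_comp_halfBraiding {C : Type*} [Category C]
    [MonoidalCategory C] [BraidedCategory C] {D : Type*} [Category D] [MonoidalCategory D]
    (T' : C ⥤ Center D) [T'.Braided] (X Y : C) {V : D} (f : (T' ⋙ forget D).obj Y ⟶ V) :
    δ (T' ⋙ forget D) X Y ≫ ((T' ⋙ forget D).obj X ◁ f) ≫ ((T'.obj X).2.β V).hom =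
      (T' ⋙ forget D).map (β_ X Y).hom ≫ δ (T' ⋙ forget D) Y X ≫
        (f ▷ (T' ⋙ forget D).obj X) := by
  have braided : (T' ⋙ forget D).map (β_ X Y).hom ≫ δ (T' ⋙ forget D) Y X =
      δ (T' ⋙ forget D) X Y ≫ ((T'.obj X).2.β (T'.obj Y).1).hom := by
    simp only [comp_δ, forget_δ]
    erw [Category.comp_id, Category.comp_id]
    exact congrArg Hom.f (by simp : T'.map (β_ X Y).hom ≫ δ T' Y X =
      δ T' X Y ≫ (β_ (T'.obj X) (T'.obj Y)).hom)
  exact (_ ≫= (T'.obj X).2.naturality f).trans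
    ((Category.assoc _ _ _).symm.trans (braided.symm =≫ _) |>.trans (Category.assoc _ _ _))

end CategoryTheory.Center

theorem stmt_1 {C : Type u₁} [Category.{v₁} C] [MonoidalCategory C] [BraidedCategory C]
    {D : Type u₂} [Category.{v₂} D] [MonoidalCategory D]
    (T' : C ⥤ Center D) [T'.Braided]
    (TR : D ⥤ C) [TR.LaxMonoidal]
    (adj : (T' ⋙ Center.forget D) ⊣ TR) [adj.IsMonoidal]
    (X : C) (V : D) :
    (adj.unit.app X ▷ TR.obj V) ≫
        LaxMonoidal.μ TR ((T' ⋙ Center.forget D).obj X) V ≫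
        TR.map ((T'.obj X).2.β V).hom =
      (β_ X (TR.obj V)).hom ≫
        (TR.obj V ◁ adj.unit.app X) ≫
        LaxMonoidal.μ TR V ((T' ⋙ Center.forget D).obj X) := by
  apply (adj.homEquiv (X ⊗ TR.obj V) (V ⊗ (T' ⋙ Center.forget D).obj X)).symm.injective
  rw [← Category.assoc]
  -- `erw`: the half-braiding is typed on `(T'.obj X).1`, which is `T.obj X` only up to unfolding
  erw [Adjunction.homEquiv_naturality_right_symm]
  rw [adj.homEquiv_symm_unit_whiskerRight_comp_μ, Adjunction.homEquiv_naturality_left_symm,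
    adj.homEquiv_symm_whiskerLeft_unit_comp_μ]
  exact (Category.assoc _ _ _).trans
    (Center.δ_forget_comp_whiskerLeft_comp_halfBraiding T' X (TR.obj V) (adj.counit.app V))
end

section
/- Let k be a field of characteristic different from 2, V a finite-dimensional k-vector space, B a nondegenerate symmetric bilinear form on V, and W ⊆ V a Lagrangian subspace (W equals its B-orthogonal complement). Let b : V ≅ V* be the isomorphism induced by B and let c be the bilinear form on V* given by c(φ, ψ) = φ(b⁻¹(ψ)). Suppose R : V* → V is a linear map whose range is contained in W and which satisfies ψ(R(φ)) + φ(R(ψ)) = 2·c(φ, ψ) for all φ, ψ ∈ V*. Then the restriction of R to the annihilator W° = { φ ∈ V* : φ|_W = 0 } is injective and maps W° bijectively onto W. -/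
/-!
If `φ ∈ W°` and `R φ = 0`, the symmetry identity with `ψ = φ` against an arbitrary `χ` reads
`0 = 2 χ(b⁻¹ φ)`, since `φ` kills `R χ ∈ W`; hence `φ = 0`, so `R` is injective on `W°`.
As `W` is Lagrangian, `dim W° = dim V - dim W = dim W^⊥ = dim W`, so the injective map
`W° → W` is also surjective.
-/

open Module

namespace LinearMap

variable {K M N : Type*} [Field K] [AddCommGroup M] [Module K M] [AddCommGroup N] [Module K N]

theorem bijOn_of_injOn_of_finrank_eq {f : M →ₗ[K] N} {p : Submodule K M} {q : Submodule K N}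
    [FiniteDimensional K p] [FiniteDimensional K q] (hmaps : Set.MapsTo f p q)
    (hinj : Set.InjOn f p) (hrank : finrank K p = finrank K q) : Set.BijOn f p q := by
  have hsurj : Function.Surjective (f.restrict hmaps) :=
    (injective_iff_surjective_of_finrank_eq_finrank hrank).mp
      ((injective_restrict_iff hmaps).mpr (disjoint_ker_iff_injOn.mpr hinj))
  refine ⟨hmaps, hinj, fun y hy => ?_⟩
  obtain ⟨⟨x, hx⟩, hxy⟩ := hsurj ⟨y, hy⟩
  exact ⟨x, hx, congrArg Subtype.val hxy⟩

end LinearMap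

namespace LinearMap.BilinForm

variable {K V : Type*} [Field K] [AddCommGroup V] [Module K V] [FiniteDimensional K V]
  {B : LinearMap.BilinForm K V}

theorem finrank_dualAnnihilator_eq_finrank_orthogonal (hB : B.Nondegenerate)
    (W : Submodule K V) : finrank K W.dualAnnihilator = finrank K (B.orthogonal W) := by
  have := Subspace.finrank_add_finrank_dualAnnihilator_eq W
  rw [finrank_orthogonal hB]
  omega

theorem disjoint_dualAnnihilator_range_ker (hchar : (2 : K) ≠ 0) (hB : B.Nondegenerate)
    {R : Dual K V →ₗ[K] V}
    (hsymmetrized : ∀ φ ψ : Dual K V, ψ (R φ) + φ (R ψ) = 2 * φ ((B.toDual hB).symm ψ)) :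
    Disjoint (range R).dualAnnihilator (ker R) := by
  refine disjoint_ker.mpr fun φ hφ hRφ => ?_
  rw [Submodule.mem_dualAnnihilator] at hφ
  have hbφ : (B.toDual hB).symm φ = 0 := by
    refine (forall_dual_apply_eq_zero_iff K _).mp fun χ => ?_
    have h := hsymmetrized χ φ
    rw [hRφ, hφ _ (mem_range_self R χ), map_zero, zero_add] at h
    exact (mul_eq_zero.mp h.symm).resolve_left hchar
  simpa using hbφ

end LinearMap.BilinForm

open LinearMap LinearMap.BilinForm in
theorem stmt_10_general {k V : Type*} [Field k] [AddCommGroup V] [Module k V]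
    [FiniteDimensional k V]
    (hchar : (2 : k) ≠ 0)
    (B : LinearMap.BilinForm k V) (hB : B.Nondegenerate)
    (W : Submodule k V) (hW : W = B.orthogonal W)
    (R : Module.Dual k V →ₗ[k] V)
    (hrange : ∀ φ : Module.Dual k V, R φ ∈ W)
    (hsymmetrized : ∀ φ ψ : Module.Dual k V,
      ψ (R φ) + φ (R ψ) = 2 * φ ((B.toDual hB).symm ψ)) :
    Set.InjOn R (W.dualAnnihilator : Set (Module.Dual k V)) ∧
      Set.BijOn R (W.dualAnnihilator : Set (Module.Dual k V)) (W : Set V) := by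
  have hrangeW : range R ≤ W := by
    rintro _ ⟨φ, rfl⟩
    exact hrange φ
  have hinj : Set.InjOn R (W.dualAnnihilator : Set (Module.Dual k V)) :=
    injOn_of_disjoint_ker (Submodule.dualAnnihilator_anti hrangeW)
      (disjoint_dualAnnihilator_range_ker hchar hB hsymmetrized)
  refine ⟨hinj, bijOn_of_injOn_of_finrank_eq (fun φ _ => hrange φ) hinj ?_⟩
  rw [finrank_dualAnnihilator_eq_finrank_orthogonal hB, ← hW]

theorem stmt_10 {k V : Type*} [Field k] [AddCommGroup V] [Module k V]
    [FiniteDimensional k V]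
    (hchar : (2 : k) ≠ 0)
    (B : LinearMap.BilinForm k V) (hB : B.Nondegenerate) (hBsymm : B.IsSymm)
    (W : Submodule k V) (hW : W = B.orthogonal W)
    (R : Module.Dual k V →ₗ[k] V)
    (hrange : ∀ φ : Module.Dual k V, R φ ∈ W)
    (hsymmetrized : ∀ φ ψ : Module.Dual k V,
      ψ (R φ) + φ (R ψ) = 2 * φ ((B.toDual hB).symm ψ)) :
    Set.InjOn R (W.dualAnnihilator : Set (Module.Dual k V)) ∧
      Set.BijOn R (W.dualAnnihilator : Set (Module.Dual k V)) (W : Set V) :=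
  stmt_10_general hchar B hB W hW R hrange hsymmetrized
end
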